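/- Let p(a) be a probability density on (0,∞) and θ = (α,β) ∈ (0,∞)². Let p(z|a,θ) = Φ(γ(a))^{z}(1-Φ(γ(a)))^{1-z} for z ∈ {0,1}, where γ(a) = (log a - log α)/β. Assume the integrals A_{kj} below are finite. Then the Fisher information matrix I(θ), with entries I(θ)_{ij} = -∫_{(0,∞)} Σ_{z∈{0,1}} p(z|a,θ) · ∂²(log p(z|a,θ))/∂θ_i∂θ_j · p(a) da (θ₁ = α, θ₂ = β), equals the 2×2 matrix with I(θ)_{11} = (A₀₁+A₀₂)/(α²β²), I(θ)_{12} = I(θ)_{21} = (A₁₁+A₁₂)/(αβ³), and I(θ)_{22} = (A₂₁+A₂₂)/β⁴, where for k = 0,1,2: A_{k1} = ∫_0^∞ log^k(a/α)·Φ'(γ(a))²/Φ(γ(a))·p(a) da and A_{k2} = ∫_0^∞ log^k(a/α)·Φ'(γ(a))²/Φ(-γ(a))·p(a) da, with Φ'(x) = (2π)^{-1/2}exp(-x²/2). -/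

import Mathlib

/-!
Write `ℓ_z(x) = z log Φ(x) + (1 - z) log (1 - Φ(x))`, so that `log p(z|a,θ) = ℓ_z(γ(a))`.
By the chain rule `∂ᵢ∂ⱼ ℓ_z(γ) = ℓ_z''(γ) ∂ᵢγ ∂ⱼγ + ℓ_z'(γ) ∂ᵢ∂ⱼγ`. Averaging over `z` with
weights `1 - Φ(γ)`, `Φ(γ)`, the score `ℓ_z'` has mean zero, so the term with `∂ᵢ∂ⱼγ` drops out,
while `ℓ_z''` has mean `-(Φ'²/Φ + Φ'²/(1 - Φ))`, and `1 - Φ(γ) = Φ(-γ)`. It remains to insert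
`∂_α γ = -1/(αβ)` and `∂_β γ = -log(a/α)/β²`.
-/

open MeasureTheory Real Filter Set

/-- The standard Gaussian cumulative distribution function. -/
noncomputable def Phi (x : ℝ) : ℝ :=
  (Real.sqrt (2 * Real.pi))⁻¹ * ∫ t in Set.Iic x, Real.exp (-t ^ 2 / 2)

/-- The standard Gaussian density `Φ'(x) = (2π)^{-1/2} exp(-x²/2)`. -/
noncomputable def Phi' (x : ℝ) : ℝ :=
  (Real.sqrt (2 * Real.pi))⁻¹ * Real.exp (-x ^ 2 / 2)

/-- `γ(a) = (log a - log α)/β`. -/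
noncomputable def gam (α β a : ℝ) : ℝ := (Real.log a - Real.log α) / β

/-- The conditional probability `p(z|a,θ) = Φ(γ(a))^z (1-Φ(γ(a)))^{1-z}` for `z ∈ {0,1}`. -/
noncomputable def pz (z : ℕ) (α β a : ℝ) : ℝ :=
  Phi (gam α β a) ^ z * (1 - Phi (gam α β a)) ^ (1 - z)

/-- `log p(z|a,θ)` as a function of the parameters. -/
noncomputable def logp (z : ℕ) (a α β : ℝ) : ℝ :=
  (z : ℝ) * Real.log (Phi (gam α β a)) +
    (1 - (z : ℝ)) * Real.log (1 - Phi (gam α β a))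

/-- Second partial derivative `∂²(log p)/∂α²`. -/
noncomputable def d2aa (z : ℕ) (a α β : ℝ) : ℝ :=
  deriv (fun α' => deriv (fun α'' => logp z a α'' β) α') α

/-- Mixed second partial derivative `∂²(log p)/∂α∂β`. -/
noncomputable def d2ab (z : ℕ) (a α β : ℝ) : ℝ :=
  deriv (fun α' => deriv (fun β' => logp z a α' β') β) α

/-- Mixed second partial derivative `∂²(log p)/∂β∂α`. -/
noncomputable def d2ba (z : ℕ) (a α β : ℝ) : ℝ :=
  deriv (fun β' => deriv (fun α' => logp z a α' β') α) β

/-- Second partial derivative `∂²(log p)/∂β²`. -/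
noncomputable def d2bb (z : ℕ) (a α β : ℝ) : ℝ :=
  deriv (fun β' => deriv (fun β'' => logp z a α β'') β') β

/-- A Fisher information entry
`-∫_{(0,∞)} Σ_{z∈{0,1}} p(z|a,θ)·∂²(log p(z|a,θ))·p(a) da`
for a given choice `d2` of second partial derivative. -/
noncomputable def fisherEntry (p : ℝ → ℝ) (d2 : ℕ → ℝ → ℝ → ℝ → ℝ) (α β : ℝ) : ℝ :=
  -∫ a in Set.Ioi (0 : ℝ),
    (pz 0 α β a * d2 0 a α β + pz 1 α β a * d2 1 a α β) * p a

/-- The integrand of `A_{k1}`. -/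
noncomputable def Ak1Int (p : ℝ → ℝ) (k : ℕ) (α β : ℝ) (a : ℝ) : ℝ :=
  Real.log (a / α) ^ k * (Phi' (gam α β a) ^ 2 / Phi (gam α β a)) * p a

/-- The integrand of `A_{k2}`. -/
noncomputable def Ak2Int (p : ℝ → ℝ) (k : ℕ) (α β : ℝ) (a : ℝ) : ℝ :=
  Real.log (a / α) ^ k * (Phi' (gam α β a) ^ 2 / Phi (-gam α β a)) * p a

/-- `A_{k1} = ∫₀^∞ log^k(a/α)·Φ'(γ(a))²/Φ(γ(a))·p(a) da`. -/
noncomputable def Ak1 (p : ℝ → ℝ) (k : ℕ) (α β : ℝ) : ℝ :=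
  ∫ a in Set.Ioi (0 : ℝ), Ak1Int p k α β a

/-- `A_{k2} = ∫₀^∞ log^k(a/α)·Φ'(γ(a))²/Φ(-γ(a))·p(a) da`. -/
noncomputable def Ak2 (p : ℝ → ℝ) (k : ℕ) (α β : ℝ) : ℝ :=
  ∫ a in Set.Ioi (0 : ℝ), Ak2Int p k α β a

lemma integrable_exp_neg_sq_div_two : Integrable fun t : ℝ => exp (-t ^ 2 / 2) := by
  simpa [neg_div, div_eq_inv_mul] using integrable_exp_neg_mul_sq (b := 1 / 2) (by norm_num)

lemma integral_exp_neg_sq_div_two : ∫ t : ℝ, exp (-t ^ 2 / 2) = √(2 * π) := by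
  have h := integral_gaussian (1 / 2)
  rw [show π / (1 / 2) = 2 * π by ring] at h
  simpa [neg_div, div_eq_inv_mul] using h

lemma Phi_pos (x : ℝ) : 0 < Phi x := by
  refine mul_pos (by positivity) ?_
  rw [setIntegral_pos_iff_support_of_nonneg_ae (.of_forall fun t => (exp_pos _).le)
    integrable_exp_neg_sq_div_two.integrableOn]
  simp [Function.support, exp_ne_zero]

lemma Phi_neg (x : ℝ) : Phi (-x) = 1 - Phi x := by
  have hsymm : ∫ t in Iic (-x), exp (-t ^ 2 / 2) = ∫ t in Ioi x, exp (-t ^ 2 / 2) := by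
    have h := integral_comp_neg_Iic (-x) fun t => exp (-t ^ 2 / 2)
    simp only [neg_neg, neg_sq] at h
    exact h
  have htotal := intervalIntegral.integral_Iic_add_Ioi (b := x)
    integrable_exp_neg_sq_div_two.integrableOn integrable_exp_neg_sq_div_two.integrableOn
  rw [integral_exp_neg_sq_div_two] at htotal
  have hIoi : ∫ t in Ioi x, exp (-t ^ 2 / 2) = √(2 * π) - ∫ t in Iic x, exp (-t ^ 2 / 2) := by
    linarith
  rw [Phi, Phi, hsymm, hIoi, mul_sub, inv_mul_cancel₀ (by positivity)]

lemma one_sub_Phi_pos (x : ℝ) : 0 < 1 - Phi x :=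
  Phi_neg x ▸ Phi_pos (-x)

lemma hasDerivAt_Phi (x : ℝ) : HasDerivAt Phi (Phi' x) x := by
  have hcont : Continuous fun t : ℝ => exp (-t ^ 2 / 2) := by fun_prop
  have hsplit : Phi = fun y => (√(2 * π))⁻¹ *
      ((∫ t in Iic 0, exp (-t ^ 2 / 2)) + ∫ t in (0 : ℝ)..y, exp (-t ^ 2 / 2)) := by
    funext y
    rw [← intervalIntegral.integral_Iic_sub_Iic integrable_exp_neg_sq_div_two.integrableOn
      integrable_exp_neg_sq_div_two.integrableOn, add_sub_cancel, Phi]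
  have hftc := intervalIntegral.integral_hasDerivAt_right
    (hcont.intervalIntegrable 0 x) (hcont.stronglyMeasurableAtFilter _ _) hcont.continuousAt
  rw [hsplit]
  exact (hftc.const_add _).const_mul _

lemma hasDerivAt_Phi' (x : ℝ) : HasDerivAt Phi' (-x * Phi' x) x := by
  have hexponent : HasDerivAt (fun y : ℝ => -y ^ 2 / 2) (-x) x :=
    ((hasDerivAt_pow 2 x).fun_neg.div_const 2).congr_deriv (by ring)
  refine (hexponent.exp.const_mul (√(2 * π))⁻¹).congr_deriv ?_
  simp only [Phi']
  ring

noncomputable def probitLogLik (z x : ℝ) : ℝ :=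
  z * log (Phi x) + (1 - z) * log (1 - Phi x)

noncomputable def probitScore (z x : ℝ) : ℝ :=
  z * (Phi' x / Phi x) - (1 - z) * (Phi' x / (1 - Phi x))

noncomputable def probitScoreDeriv (z x : ℝ) : ℝ :=
  z * ((-x * Phi' x * Phi x - Phi' x ^ 2) / Phi x ^ 2)
    - (1 - z) * ((-x * Phi' x * (1 - Phi x) + Phi' x ^ 2) / (1 - Phi x) ^ 2)

lemma hasDerivAt_probitLogLik (z x : ℝ) :
    HasDerivAt (probitLogLik z) (probitScore z x) x := by
  have hlog := (hasDerivAt_Phi x).log (Phi_pos x).ne'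
  have hlog' := ((hasDerivAt_Phi x).const_sub 1).log (one_sub_Phi_pos x).ne'
  refine ((hlog.const_mul z).add (hlog'.const_mul (1 - z))).congr_deriv ?_
  simp only [probitScore]
  ring

lemma hasDerivAt_probitScore (z x : ℝ) :
    HasDerivAt (probitScore z) (probitScoreDeriv z x) x := by
  have hq := (hasDerivAt_Phi' x).div (hasDerivAt_Phi x) (Phi_pos x).ne'
  have hq' := (hasDerivAt_Phi' x).div ((hasDerivAt_Phi x).const_sub 1) (one_sub_Phi_pos x).ne'
  refine ((hq.const_mul z).sub (hq'.const_mul (1 - z))).congr_deriv ?_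
  simp only [probitScoreDeriv]
  ring

lemma expected_probitScore (x : ℝ) :
    (1 - Phi x) * probitScore 0 x + Phi x * probitScore 1 x = 0 := by
  have := (Phi_pos x).ne'
  have := (one_sub_Phi_pos x).ne'
  simp only [probitScore]
  field_simp
  ring

lemma expected_probitScoreDeriv (x : ℝ) :
    (1 - Phi x) * probitScoreDeriv 0 x + Phi x * probitScoreDeriv 1 x
      = -(Phi' x ^ 2 / Phi x + Phi' x ^ 2 / Phi (-x)) := by
  have := (Phi_pos x).ne'
  have := (one_sub_Phi_pos x).ne'
  simp only [probitScoreDeriv, Phi_neg]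
  field_simp
  ring

lemma deriv_probitScore_comp_mul (z : ℝ) {g h : ℝ → ℝ} {g' h' t : ℝ}
    (hg : HasDerivAt g g' t) (hh : HasDerivAt h h' t) :
    deriv (fun s => probitScore z (g s) * h s) t
      = probitScoreDeriv z (g t) * g' * h t + probitScore z (g t) * h' :=
  (((hasDerivAt_probitScore z (g t)).comp t hg).mul hh).deriv

lemma hasDerivAt_gam_left (β a : ℝ) {α : ℝ} (hα : α ≠ 0) :
    HasDerivAt (fun α' => gam α' β a) (-(α * β)⁻¹) α := by
  refine (((hasDerivAt_log hα).const_sub (log a)).div_const β).congr_deriv ?_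
  rw [mul_inv]
  ring

lemma hasDerivAt_gam_right (α a : ℝ) {β : ℝ} (hβ : β ≠ 0) :
    HasDerivAt (fun β' => gam α β' a) (-(log a - log α) / β ^ 2) β := by
  refine ((hasDerivAt_inv hβ).const_mul (log a - log α)).congr_deriv ?_
  ring

lemma deriv_logp_left (z : ℕ) (a β : ℝ) {α : ℝ} (hα : α ≠ 0) :
    deriv (fun α' => logp z a α' β) α = probitScore z (gam α β a) * -(α * β)⁻¹ :=
  ((hasDerivAt_probitLogLik z _).comp α (hasDerivAt_gam_left β a hα)).deriv

lemma deriv_logp_right (z : ℕ) (a α : ℝ) {β : ℝ} (hβ : β ≠ 0) :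
    deriv (fun β' => logp z a α β') β
      = probitScore z (gam α β a) * (-(log a - log α) / β ^ 2) :=
  ((hasDerivAt_probitLogLik z _).comp β (hasDerivAt_gam_right α a hβ)).deriv

section SecondPartials

variable (z : ℕ) {a α β : ℝ}

lemma d2aa_eq (hα : 0 < α) (hβ : β ≠ 0) :
    d2aa z a α β = probitScoreDeriv z (gam α β a) * (1 / (α ^ 2 * β ^ 2))
      + probitScore z (gam α β a) * (1 / (α ^ 2 * β)) := by
  have hinner : (fun α' => deriv (fun α'' => logp z a α'' β) α')
      =ᶠ[nhds α] fun α' => probitScore z (gam α' β a) * -(α' * β)⁻¹ := by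
    filter_upwards [Ioi_mem_nhds hα] with α' hα' using deriv_logp_left z a β (ne_of_gt hα')
  have hcoef : HasDerivAt (fun α' => -(α' * β)⁻¹) (1 / (α ^ 2 * β)) α := by
    refine (((hasDerivAt_id' α).mul_const β).inv (mul_ne_zero hα.ne' hβ)).fun_neg.congr_deriv ?_
    field_simp
  rw [d2aa, hinner.deriv_eq,
    deriv_probitScore_comp_mul _ (hasDerivAt_gam_left β a hα.ne') hcoef]
  field_simp

lemma d2ab_eq (ha : 0 < a) (hα : 0 < α) (hβ : β ≠ 0) :
    d2ab z a α β = probitScoreDeriv z (gam α β a) * (log (a / α) / (α * β ^ 3))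
      + probitScore z (gam α β a) * (1 / (α * β ^ 2)) := by
  have hinner : (fun α' => deriv (fun β' => logp z a α' β') β)
      = fun α' => probitScore z (gam α' β a) * (-(log a - log α') / β ^ 2) :=
    funext fun α' => deriv_logp_right z a α' hβ
  have hcoef : HasDerivAt (fun α' => -(log a - log α') / β ^ 2) (1 / (α * β ^ 2)) α := by
    refine (((hasDerivAt_log hα.ne').const_sub (log a)).neg.div_const (β ^ 2)).congr_deriv ?_
    field_simp
  rw [d2ab, hinner, deriv_probitScore_comp_mul _ (hasDerivAt_gam_left β a hα.ne') hcoef,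
    log_div ha.ne' hα.ne']
  field_simp

lemma d2ba_eq (ha : 0 < a) (hα : 0 < α) (hβ : β ≠ 0) :
    d2ba z a α β = probitScoreDeriv z (gam α β a) * (log (a / α) / (α * β ^ 3))
      + probitScore z (gam α β a) * (1 / (α * β ^ 2)) := by
  have hinner : (fun β' => deriv (fun α' => logp z a α' β') α)
      = fun β' => probitScore z (gam α β' a) * -(α * β')⁻¹ :=
    funext fun β' => deriv_logp_left z a β' hα.ne'
  have hcoef : HasDerivAt (fun β' => -(α * β')⁻¹) (1 / (α * β ^ 2)) β := by
    refine (((hasDerivAt_id' β).const_mul α).inv (mul_ne_zero hα.ne' hβ)).fun_neg.congr_deriv ?_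
    field_simp
  rw [d2ba, hinner, deriv_probitScore_comp_mul _ (hasDerivAt_gam_right α a hβ) hcoef,
    log_div ha.ne' hα.ne']
  field_simp

lemma d2bb_eq (ha : 0 < a) (hα : 0 < α) (hβ : 0 < β) :
    d2bb z a α β = probitScoreDeriv z (gam α β a) * (log (a / α) ^ 2 / β ^ 4)
      + probitScore z (gam α β a) * (2 * log (a / α) / β ^ 3) := by
  have hinner : (fun β' => deriv (fun β'' => logp z a α β'') β')
      =ᶠ[nhds β] fun β' => probitScore z (gam α β' a) * (-(log a - log α) / β' ^ 2) := by
    filter_upwards [Ioi_mem_nhds hβ] with β' hβ' using deriv_logp_right z a α (ne_of_gt hβ')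
  have hcoef : HasDerivAt (fun β' => -(log a - log α) / β' ^ 2)
      (2 * (log a - log α) / β ^ 3) β := by
    refine (((hasDerivAt_pow 2 β).inv (pow_ne_zero 2 hβ.ne')).const_mul
      (-(log a - log α))).congr_deriv ?_
    field_simp
    ring
  rw [d2bb, hinner.deriv_eq,
    deriv_probitScore_comp_mul _ (hasDerivAt_gam_right α a hβ.ne') hcoef, log_div ha.ne' hα.ne']
  field_simp

end SecondPartials

lemma pz_zero (α β a : ℝ) : pz 0 α β a = 1 - Phi (gam α β a) := by
  simp [pz]

lemma pz_one (α β a : ℝ) : pz 1 α β a = Phi (gam α β a) := by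
  simp [pz]

lemma fisherEntry_eq_of_second_partial (p : ℝ → ℝ) (d2 : ℕ → ℝ → ℝ → ℝ → ℝ) (k : ℕ)
    (C : ℝ) (e : ℝ → ℝ) {α β : ℝ}
    (hd2 : ∀ a ∈ Ioi (0 : ℝ), ∀ z : ℕ, d2 z a α β
      = probitScoreDeriv z (gam α β a) * (log (a / α) ^ k / C)
        + probitScore z (gam α β a) * e a)
    (hInt1 : IntegrableOn (Ak1Int p k α β) (Ioi 0))
    (hInt2 : IntegrableOn (Ak2Int p k α β) (Ioi 0)) :
    fisherEntry p d2 α β = (Ak1 p k α β + Ak2 p k α β) / C := by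
  have hintegrand : ∀ a ∈ Ioi (0 : ℝ),
      (pz 0 α β a * d2 0 a α β + pz 1 α β a * d2 1 a α β) * p a
        = -((Ak1Int p k α β a + Ak2Int p k α β a) / C) := by
    intro a ha
    have h0 := hd2 a ha 0
    have h1 := hd2 a ha 1
    simp only [Nat.cast_zero, Nat.cast_one] at h0 h1
    rw [pz_zero, pz_one, h0, h1, Ak1Int, Ak2Int]
    linear_combination (log (a / α) ^ k / C * p a) * expected_probitScoreDeriv (gam α β a)
      + (e a * p a) * expected_probitScore (gam α β a)
  rw [fisherEntry, setIntegral_congr_fun measurableSet_Ioi hintegrand, integral_neg, neg_neg,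
    integral_div, integral_add hInt1 hInt2, Ak1, Ak2]

theorem stmt7_general (p : ℝ → ℝ)
    (α β : ℝ) (hα : 0 < α) (hβ : 0 < β)
    (hInt1 : ∀ k : ℕ, k ≤ 2 → IntegrableOn (Ak1Int p k α β) (Set.Ioi 0))
    (hInt2 : ∀ k : ℕ, k ≤ 2 → IntegrableOn (Ak2Int p k α β) (Set.Ioi 0)) :
    !![fisherEntry p d2aa α β, fisherEntry p d2ab α β;
       fisherEntry p d2ba α β, fisherEntry p d2bb α β] =
    !![(Ak1 p 0 α β + Ak2 p 0 α β) / (α ^ 2 * β ^ 2),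
       (Ak1 p 1 α β + Ak2 p 1 α β) / (α * β ^ 3);
       (Ak1 p 1 α β + Ak2 p 1 α β) / (α * β ^ 3),
       (Ak1 p 2 α β + Ak2 p 2 α β) / β ^ 4] := by
  rw [fisherEntry_eq_of_second_partial p d2aa 0 _ _
      (fun a _ z => by rw [d2aa_eq z hα hβ.ne', pow_zero]) (hInt1 0 (by norm_num))
      (hInt2 0 (by norm_num)),
    fisherEntry_eq_of_second_partial p d2ab 1 _ _
      (fun a ha z => by rw [d2ab_eq z ha hα hβ.ne', pow_one]) (hInt1 1 (by norm_num))
      (hInt2 1 (by norm_num)),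
    fisherEntry_eq_of_second_partial p d2ba 1 _ _
      (fun a ha z => by rw [d2ba_eq z ha hα hβ.ne', pow_one]) (hInt1 1 (by norm_num))
      (hInt2 1 (by norm_num)),
    fisherEntry_eq_of_second_partial p d2bb 2 _ _
      (fun a ha z => d2bb_eq z ha hα hβ) (hInt1 2 (by norm_num))
      (hInt2 2 (by norm_num))]

/-- The Fisher information matrix of the log-normal (probit) fragility model equals the
`2×2` matrix with entries `(A₀₁+A₀₂)/(α²β²)`, `(A₁₁+A₁₂)/(αβ³)` (off-diagonal), and
`(A₂₁+A₂₂)/β⁴`, provided the integrals `A_{kj}` are finite. -/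
theorem stmt7 (p : ℝ → ℝ) (hp0 : ∀ a, 0 ≤ p a)
    (hp1 : ∫ a in Set.Ioi (0 : ℝ), p a = 1)
    (α β : ℝ) (hα : 0 < α) (hβ : 0 < β)
    (hInt1 : ∀ k : ℕ, k ≤ 2 → IntegrableOn (Ak1Int p k α β) (Set.Ioi 0))
    (hInt2 : ∀ k : ℕ, k ≤ 2 → IntegrableOn (Ak2Int p k α β) (Set.Ioi 0)) :
    !![fisherEntry p d2aa α β, fisherEntry p d2ab α β;
       fisherEntry p d2ba α β, fisherEntry p d2bb α β] =
    !![(Ak1 p 0 α β + Ak2 p 0 α β) / (α ^ 2 * β ^ 2),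
       (Ak1 p 1 α β + Ak2 p 1 α β) / (α * β ^ 3);
       (Ak1 p 1 α β + Ak2 p 1 α β) / (α * β ^ 3),
       (Ak1 p 2 α β + Ak2 p 2 α β) / β ^ 4] :=
  stmt7_general p α β hα hβ hInt1 hInt2
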